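/- arXiv:1507.02504 — 5 statements merged into one kernel-verified Lean document; each statement's English description precedes it below -/
import Mathlib

section
/- It is impossible to find points u₁, u₂, u₃, w₁, w₂, w₃ in ℝ³ such that for every pair (i, j) with 1 ≤ i, j ≤ 3 there exists a closed half-space containing u_i and w_j but none of the other four points. -/
open scoped RealInnerProductSpace

noncomputable section

/-- max of three reals -/
def max3 (a b c : ℝ) : ℝ := max a (max b c)
/-- min of three reals -/
def min3 (a b c : ℝ) : ℝ := min a (min b c)
/-- median of three reals -/
def med3 (a b c : ℝ) : ℝ := a + b + c - max3 a b c - min3 a b c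

lemma le_max3_1 (a b c : ℝ) : a ≤ max3 a b c := le_max_left _ _
lemma le_max3_2 (a b c : ℝ) : b ≤ max3 a b c := le_max_of_le_right (le_max_left _ _)
lemma le_max3_3 (a b c : ℝ) : c ≤ max3 a b c := le_max_of_le_right (le_max_right _ _)
lemma min3_le_1 (a b c : ℝ) : min3 a b c ≤ a := min_le_left _ _
lemma min3_le_max3 (a b c : ℝ) : min3 a b c ≤ max3 a b c :=
  le_trans (min3_le_1 a b c) (le_max3_1 a b c)

lemma max3_neg (a b c : ℝ) : max3 (-a) (-b) (-c) = - min3 a b c := by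
  simp [max3, min3, max_neg_neg, min_neg_neg]

lemma min3_neg (a b c : ℝ) : min3 (-a) (-b) (-c) = - max3 a b c := by
  simp [max3, min3, min_neg_neg]

lemma med3_neg (a b c : ℝ) : med3 (-a) (-b) (-c) = - med3 a b c := by
  simp only [med3, max3_neg, min3_neg]; ring

lemma med3_le_max3 (a b c : ℝ) : med3 a b c ≤ max3 a b c := by
  rcases le_total a b with h1 | h1 <;> rcases le_total b c with h2 | h2 <;>
    rcases le_total a c with h3 | h3 <;>
    simp only [med3, max3, min3, max_def, min_def] <;> split_ifs <;> linarith

lemma med3_selector {a b c : ℝ} (h1 : med3 a b c ≤ 0) (h2 : 0 ≤ max3 a b c) :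
    (0 ≤ a ∧ b ≤ 0 ∧ c ≤ 0) ∨ (0 ≤ b ∧ a ≤ 0 ∧ c ≤ 0) ∨ (0 ≤ c ∧ a ≤ 0 ∧ b ≤ 0) := by
  rcases le_total a b with h4 | h4 <;> rcases le_total b c with h5 | h5 <;>
    rcases le_total a c with h6 | h6 <;>
    simp only [med3, max3, min3, max_def, min_def] at h1 h2 <;> split_ifs at h1 h2 <;>
    first
      | (left; refine ⟨by linarith, by linarith, by linarith⟩)
      | (right; left; refine ⟨by linarith, by linarith, by linarith⟩)
      | (right; right; refine ⟨by linarith, by linarith, by linarith⟩)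


open Real

/-- the sinusoid family attached to two triples of coefficients -/
def tC (x y : Fin 3 → ℝ) (θ : ℝ) (i : Fin 3) : ℝ := cos θ * x i + sin θ * y i

def tMax (x y : Fin 3 → ℝ) (θ : ℝ) : ℝ := max3 (tC x y θ 0) (tC x y θ 1) (tC x y θ 2)
def tMin (x y : Fin 3 → ℝ) (θ : ℝ) : ℝ := min3 (tC x y θ 0) (tC x y θ 1) (tC x y θ 2)
def tMed (x y : Fin 3 → ℝ) (θ : ℝ) : ℝ := med3 (tC x y θ 0) (tC x y θ 1) (tC x y θ 2)

lemma tC_add_pi (x y : Fin 3 → ℝ) (θ : ℝ) (i : Fin 3) :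
    tC x y (θ + π) i = - tC x y θ i := by
  simp [tC, cos_add_pi, sin_add_pi]; ring

lemma continuous_tC (x y : Fin 3 → ℝ) (i : Fin 3) : Continuous (fun θ => tC x y θ i) :=
  (continuous_cos.mul continuous_const).add (continuous_sin.mul continuous_const)

lemma continuous_tMax (x y : Fin 3 → ℝ) : Continuous (tMax x y) :=
  ((continuous_tC x y 0).max ((continuous_tC x y 1).max (continuous_tC x y 2)))

lemma continuous_tMin (x y : Fin 3 → ℝ) : Continuous (tMin x y) :=
  ((continuous_tC x y 0).min ((continuous_tC x y 1).min (continuous_tC x y 2)))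

lemma continuous_tMed (x y : Fin 3 → ℝ) : Continuous (tMed x y) := by
  have : tMed x y = fun θ => tC x y θ 0 + tC x y θ 1 + tC x y θ 2 - tMax x y θ - tMin x y θ := by
    funext θ; rfl
  rw [this]
  exact (((((continuous_tC x y 0).add (continuous_tC x y 1)).add
    (continuous_tC x y 2)).sub (continuous_tMax x y)).sub (continuous_tMin x y))




lemma tMax_add_pi (x y : Fin 3 → ℝ) (θ : ℝ) : tMax x y (θ + π) = - tMin x y θ := by
  simp only [tMax, tMin, tC_add_pi, max3_neg]

lemma tMed_add_pi (x y : Fin 3 → ℝ) (θ : ℝ) : tMed x y (θ + π) = - tMed x y θ := by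
  simp only [tMed, tC_add_pi, med3_neg]

/-- key convexity fact: a sinusoid negative at two points less than π apart
is negative in between -/
lemma sinusoid_neg_between {c d α β φ : ℝ} (h1 : α ≤ φ) (h2 : φ ≤ β) (h3 : β - α < π)
    (hα : cos α * c + sin α * d < 0) (hβ : cos β * c + sin β * d < 0) :
    cos φ * c + sin φ * d < 0 := by
  have key : sin (β - α) * (cos φ * c + sin φ * d)
      = sin (β - φ) * (cos α * c + sin α * d) + sin (φ - α) * (cos β * c + sin β * d) := by
    simp only [sin_sub]; ring
  rcases eq_or_lt_of_le (le_trans h1 h2 : α ≤ β) with heq | hlt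
  · have : φ = α := le_antisymm (heq ▸ h2) h1
    rwa [this]
  · have hs : 0 < sin (β - α) := sin_pos_of_pos_of_lt_pi (by linarith) h3
    have hs1 : 0 ≤ sin (β - φ) := sin_nonneg_of_nonneg_of_le_pi (by linarith) (by linarith)
    have hs2 : 0 ≤ sin (φ - α) := sin_nonneg_of_nonneg_of_le_pi (by linarith) (by linarith)
    rcases eq_or_lt_of_le hs1 with he1 | hl1
    · -- sin (β - φ) = 0 with 0 ≤ β - φ < π  →  φ = β
      have : β - φ = 0 := by
        rcases (sin_eq_zero_iff_of_lt_of_lt (by linarith) (by linarith)).1 he1.symm with h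
        exact h
      have : φ = β := by linarith
      rwa [this]
    · have t1 : sin (β - φ) * (cos α * c + sin α * d) < 0 := mul_neg_of_pos_of_neg hl1 hα
      have t2 : sin (φ - α) * (cos β * c + sin β * d) ≤ 0 :=
        mul_nonpos_of_nonneg_of_nonpos hs2 (le_of_lt hβ)
      nlinarith [key, hs]


lemma tC_le_tMax (x y : Fin 3 → ℝ) (θ : ℝ) (i : Fin 3) : tC x y θ i ≤ tMax x y θ := by
  fin_cases i <;> simp only [tMax, max3] <;>
    [exact le_max_left _ _;
     exact le_max_of_le_right (le_max_left _ _);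
     exact le_max_of_le_right (le_max_right _ _)]

lemma tMin_le_tMax (x y : Fin 3 → ℝ) (θ : ℝ) : tMin x y θ ≤ tMax x y θ :=
  le_trans (min_le_left _ _) (tC_le_tMax x y θ 0)

lemma tMed_le_tMax (x y : Fin 3 → ℝ) (θ : ℝ) : tMed x y θ ≤ tMax x y θ := by
  have h01 := tC_le_tMax x y θ 0; have h1 := tC_le_tMax x y θ 1
  have h2 := tC_le_tMax x y θ 2
  have hmin : tMin x y θ = tC x y θ 0 ∨ tMin x y θ = tC x y θ 1 ∨ tMin x y θ = tC x y θ 2 := by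
    simp only [tMin, min3, min_def]; split_ifs <;> tauto
  have hmax : tMax x y θ = tC x y θ 0 ∨ tMax x y θ = tC x y θ 1 ∨ tMax x y θ = tC x y θ 2 := by
    simp only [tMax, max3, max_def]; split_ifs <;> tauto
  have hminle := tMin_le_tMax x y θ
  show tC x y θ 0 + tC x y θ 1 + tC x y θ 2 - tMax x y θ - tMin x y θ ≤ tMax x y θ
  rcases hmin with h | h | h <;> rcases hmax with h' | h' | h' <;> linarith

lemma tC_lt_of_tMax_lt {x y : Fin 3 → ℝ} {θ t : ℝ} (h : tMax x y θ < t) (i : Fin 3) :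
    tC x y θ i < t := lt_of_le_of_lt (tC_le_tMax x y θ i) h

lemma tMax_lt_of_tC {x y : Fin 3 → ℝ} {θ t : ℝ} (h : ∀ i, tC x y θ i < t) :
    tMax x y θ < t := by
  simp only [tMax, max3]
  exact max_lt (h 0) (max_lt (h 1) (h 2))

/-- Core step: if no angle is "good" for both classes, then the second class
is never all-negative. -/
lemma aux_no_allneg (xu yu xw yw : Fin 3 → ℝ)
    (hsx : (∑ i, xu i) + (∑ i, xw i) = 0)
    (hsy : (∑ i, yu i) + (∑ i, yw i) = 0)
    (hno : ∀ θ : ℝ, ¬((tMed xu yu θ ≤ 0 ∧ 0 ≤ tMax xu yu θ) ∧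
        (tMed xw yw θ ≤ 0 ∧ 0 ≤ tMax xw yw θ))) :
    ∀ θ : ℝ, 0 ≤ tMax xw yw θ := by
  intro θ₁
  by_contra hneg'
  push_neg at hneg'
  set MU := tMax xu yu with hMU_def
  set mu := tMed xu yu with hmu_def
  set MW := tMax xw yw with hMW_def
  set mw := tMed xw yw with hmw_def
  have hneg : MW θ₁ < 0 := hneg'
  -- total sum of the six sinusoids is zero
  have hS : ∀ θ : ℝ, tC xu yu θ 0 + tC xu yu θ 1 + tC xu yu θ 2
      + tC xw yw θ 0 + tC xw yw θ 1 + tC xw yw θ 2 = 0 := by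
    intro θ
    simp only [Fin.sum_univ_three] at hsx hsy
    simp only [tC]
    linear_combination cos θ * hsx + sin θ * hsy
  have hπ : (0:ℝ) < π := pi_pos
  -- τ : first zero of MW to the right of θ₁
  have hScl : IsClosed (Set.Icc θ₁ (θ₁ + π) ∩ {θ | 0 ≤ MW θ}) :=
    isClosed_Icc.inter (isClosed_le continuous_const (continuous_tMax xw yw))
  have hSne : ((Set.Icc θ₁ (θ₁ + π) ∩ {θ | 0 ≤ MW θ})).Nonempty := by
    refine ⟨θ₁ + π, ⟨by constructor <;> linarith, ?_⟩⟩
    have h1 : MW (θ₁ + π) = - tMin xw yw θ₁ := tMax_add_pi xw yw θ₁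
    have h2 : tMin xw yw θ₁ ≤ MW θ₁ := tMin_le_tMax xw yw θ₁
    simp only [Set.mem_setOf_eq, h1]; linarith
  have hSbdd : BddBelow (Set.Icc θ₁ (θ₁ + π) ∩ {θ | 0 ≤ MW θ}) :=
    BddBelow.mono Set.inter_subset_left bddBelow_Icc
  set τ := sInf (Set.Icc θ₁ (θ₁ + π) ∩ {θ | 0 ≤ MW θ}) with hτ_def
  have hτS := hScl.csInf_mem hSne hSbdd
  rw [← hτ_def] at hτS
  obtain ⟨hτIcc, hτ0⟩ := hτS
  have hτ0 : 0 ≤ MW τ := hτ0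
  have hτgt : θ₁ < τ := lt_of_le_of_ne hτIcc.1 (fun h => by rw [← h] at hτ0; linarith)
  have hMWτ : MW τ = 0 := by
    obtain ⟨ζ, hζIcc, hζ⟩ := intermediate_value_Icc hτIcc.1
      ((continuous_tMax xw yw).continuousOn) (Set.mem_Icc.2 ⟨hneg.le, hτ0⟩)
    have hζS : ζ ∈ Set.Icc θ₁ (θ₁ + π) ∩ {θ | 0 ≤ MW θ} :=
      ⟨⟨hζIcc.1, le_trans hζIcc.2 hτIcc.2⟩, le_of_eq hζ.symm⟩
    have : τ ≤ ζ := csInf_le hSbdd hζS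
    have : ζ = τ := le_antisymm hζIcc.2 this
    rw [← this]; exact hζ
  -- τ' : last zero of MW to the left of θ₁
  have hS'cl : IsClosed (Set.Icc (θ₁ - π) θ₁ ∩ {θ | 0 ≤ MW θ}) :=
    isClosed_Icc.inter (isClosed_le continuous_const (continuous_tMax xw yw))
  have hS'ne : ((Set.Icc (θ₁ - π) θ₁ ∩ {θ | 0 ≤ MW θ})).Nonempty := by
    refine ⟨θ₁ - π, ⟨by constructor <;> linarith, ?_⟩⟩
    have h1 : MW ((θ₁ - π) + π) = - tMin xw yw (θ₁ - π) := tMax_add_pi xw yw (θ₁ - π)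
    rw [show (θ₁ - π) + π = θ₁ by ring] at h1
    have h2 : tMin xw yw (θ₁ - π) ≤ MW (θ₁ - π) := tMin_le_tMax xw yw (θ₁ - π)
    simp only [Set.mem_setOf_eq]; linarith
  have hS'bdd : BddAbove (Set.Icc (θ₁ - π) θ₁ ∩ {θ | 0 ≤ MW θ}) :=
    BddAbove.mono Set.inter_subset_left bddAbove_Icc
  set τ' := sSup (Set.Icc (θ₁ - π) θ₁ ∩ {θ | 0 ≤ MW θ}) with hτ'_def
  have hτ'S := hS'cl.csSup_mem hS'ne hS'bdd
  rw [← hτ'_def] at hτ'S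
  obtain ⟨hτ'Icc, hτ'0⟩ := hτ'S
  have hτ'0 : 0 ≤ MW τ' := hτ'0
  have hτ'lt : τ' < θ₁ := lt_of_le_of_ne hτ'Icc.2 (fun h => by rw [h] at hτ'0; linarith)
  have hMWτ' : MW τ' = 0 := by
    obtain ⟨ζ, hζIcc, hζ⟩ := intermediate_value_Icc' hτ'Icc.2
      ((continuous_tMax xw yw).continuousOn) (Set.mem_Icc.2 ⟨hneg.le, hτ'0⟩)
    have hζS : ζ ∈ Set.Icc (θ₁ - π) θ₁ ∩ {θ | 0 ≤ MW θ} :=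
      ⟨⟨le_trans hτ'Icc.1 hζIcc.1, hζIcc.2⟩, le_of_eq hζ.symm⟩
    have : ζ ≤ τ' := le_csSup hS'bdd hζS
    have : ζ = τ' := le_antisymm this hζIcc.1
    rw [← this]; exact hζ
  -- region property on the left
  have hregion' : ∀ θ : ℝ, θ₁ - π ≤ θ → θ ≤ θ₁ → τ' < θ → MW θ < 0 := by
    intro θ ha hb hc
    by_contra hge
    push_neg at hge
    have : θ ≤ τ' := le_csSup hS'bdd ⟨⟨ha, hb⟩, hge⟩
    linarith
  -- the all-negative window has length ≤ π
  have hlen : τ ≤ τ' + π := by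
    by_contra hc
    push_neg at hc
    have h1 : MW (τ - π) < 0 := by
      refine hregion' (τ - π) (by linarith [hτIcc.1]) (by linarith [hτIcc.2]) (by linarith)
    have h2 : tMin xw yw (τ - π) ≤ MW (τ - π) := tMin_le_tMax xw yw (τ - π)
    have h3 : MW ((τ - π) + π) = - tMin xw yw (τ - π) := tMax_add_pi xw yw (τ - π)
    rw [show (τ - π) + π = τ by ring] at h3
    linarith
  -- at τ and τ' the first class has positive median
  have hmed_pos : ∀ σ : ℝ, MW σ = 0 → 0 < mu σ := by
    intro σ hσ
    have hgw : mw σ ≤ 0 ∧ 0 ≤ MW σ := ⟨le_trans (tMed_le_tMax xw yw σ) (le_of_eq hσ), hσ.ge⟩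
    have := hno σ
    rcases not_and_or.1 this with hU | hW
    · rcases not_and_or.1 hU with h1 | h2
      · linarith [not_le.1 h1]
      · exfalso
        have hMUneg : MU σ < 0 := not_le.1 h2
        have c0 := tC_lt_of_tMax_lt hMUneg 0
        have c1 := tC_lt_of_tMax_lt hMUneg 1
        have c2 := tC_lt_of_tMax_lt hMUneg 2
        have d0 := tC_le_tMax xw yw σ 0
        have d1 := tC_le_tMax xw yw σ 1
        have d2 := tC_le_tMax xw yw σ 2
        have := hS σ
        have hσ'' : tMax xw yw σ = 0 := hσ
        rw [hσ''] at d0 d1 d2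
        linarith
    · exact absurd hgw hW
  have hmuτ : 0 < mu τ := hmed_pos τ hMWτ
  have hmuτ' : 0 < mu τ' := hmed_pos τ' hMWτ'
  have hmu2 : mu (τ' + π) < 0 := by
    have := tMed_add_pi xu yu τ'
    rw [← hmu_def] at this; linarith
  -- find a zero of mu in [τ, τ' + π]
  obtain ⟨θ₂, hθ₂Icc, hθ₂⟩ := intermediate_value_Icc' hlen
    ((continuous_tMed xu yu).continuousOn) (Set.mem_Icc.2 ⟨hmu2.le, hmuτ.le⟩)
  have hθ₂gt : τ < θ₂ := lt_of_le_of_ne hθ₂Icc.1 (fun h => by rw [← h] at hθ₂; linarith)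
  have hθ₂lt : θ₂ < τ' + π := lt_of_le_of_ne hθ₂Icc.2 (fun h => by rw [h] at hθ₂; linarith)
  -- the first class is good at θ₂ and at θ₂ - π
  have hgU : mu θ₂ ≤ 0 ∧ 0 ≤ MU θ₂ := ⟨hθ₂.le, hθ₂ ▸ tMed_le_tMax xu yu θ₂⟩
  have hmuθ₂' : mu (θ₂ - π) = 0 := by
    have := tMed_add_pi xu yu (θ₂ - π)
    rw [show (θ₂ - π) + π = θ₂ by ring] at this
    rw [← hmu_def] at this; linarith
  have hgU' : mu (θ₂ - π) ≤ 0 ∧ 0 ≤ MU (θ₂ - π) :=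
    ⟨hmuθ₂'.le, hmuθ₂' ▸ tMed_le_tMax xu yu (θ₂ - π)⟩
  have hW2 := (not_and_or.1 (fun hw => hno θ₂ ⟨hgU, hw⟩))
  have hW3 := (not_and_or.1 (fun hw => hno (θ₂ - π) ⟨hgU', hw⟩))
  have hmwflip : mw (θ₂ - π) = - mw θ₂ := by
    have := tMed_add_pi xw yw (θ₂ - π)
    rw [show (θ₂ - π) + π = θ₂ by ring] at this
    rw [← hmw_def] at this; linarith
  -- rule out MW θ₂ < 0
  have hnc1 : ¬ (MW θ₂ < 0) := by
    intro hcase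
    have hτneg : MW τ < 0 := by
      refine tMax_lt_of_tC (fun i => ?_)
      have e1 : tC xw yw θ₁ i < 0 := tC_lt_of_tMax_lt hneg i
      have e2 : tC xw yw θ₂ i < 0 := tC_lt_of_tMax_lt hcase i
      exact sinusoid_neg_between hτIcc.1 hθ₂gt.le
        (by linarith) e1 e2
    linarith
  -- rule out MW (θ₂ - π) < 0
  have hnc2 : ¬ (MW (θ₂ - π) < 0) := by
    intro hcase
    have hτ'neg : MW τ' < 0 := by
      refine tMax_lt_of_tC (fun i => ?_)
      have e1 : tC xw yw (θ₂ - π) i < 0 := tC_lt_of_tMax_lt hcase i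
      have e2 : tC xw yw θ₁ i < 0 := tC_lt_of_tMax_lt hneg i
      exact sinusoid_neg_between (by linarith) hτ'lt.le (by linarith) e1 e2
    linarith
  -- remaining case : contradiction on the median signs
  have h1 : 0 < mw θ₂ := by
    rcases hW2 with h | h
    · exact lt_of_not_ge h
    · exact absurd (not_le.1 h) hnc1
  have h2 : 0 < mw (θ₂ - π) := by
    rcases hW3 with h | h
    · exact lt_of_not_ge h
    · exact absurd (not_le.1 h) hnc2
  rw [hmwflip] at h2
  linarith


/-- Main 2-dimensional sign lemma: some angle is good for both classes. -/
lemma exists_good_angle (xu yu xw yw : Fin 3 → ℝ)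
    (hsx : (∑ i, xu i) + (∑ i, xw i) = 0)
    (hsy : (∑ i, yu i) + (∑ i, yw i) = 0) :
    ∃ θ : ℝ, (tMed xu yu θ ≤ 0 ∧ 0 ≤ tMax xu yu θ) ∧
      (tMed xw yw θ ≤ 0 ∧ 0 ≤ tMax xw yw θ) := by
  by_contra hno'
  push_neg at hno'
  have hno : ∀ θ : ℝ, ¬((tMed xu yu θ ≤ 0 ∧ 0 ≤ tMax xu yu θ) ∧
      (tMed xw yw θ ≤ 0 ∧ 0 ≤ tMax xw yw θ)) := by
    intro θ ⟨h1, h2⟩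
    exact absurd h2.2 (not_le.2 (hno' θ h1 h2.1))
  have hMW : ∀ θ, 0 ≤ tMax xw yw θ := aux_no_allneg xu yu xw yw hsx hsy hno
  have hMU : ∀ θ, 0 ≤ tMax xu yu θ := by
    refine aux_no_allneg xw yw xu yu (by linarith) (by linarith) ?_
    intro θ hcon
    exact hno θ ⟨hcon.2, hcon.1⟩
  -- Borsuk: a common zero of the difference of medians
  set D : ℝ → ℝ := fun θ => tMed xu yu θ - tMed xw yw θ with hD_def
  have hDc : Continuous D := (continuous_tMed xu yu).sub (continuous_tMed xw yw)
  have hDpi : D π = - D 0 := by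
    have h1 := tMed_add_pi xu yu 0
    have h2 := tMed_add_pi xw yw 0
    rw [zero_add] at h1 h2
    simp only [hD_def, h1, h2]; ring
  have hzero : ∃ θ, D θ = 0 := by
    rcases le_total (D 0) 0 with hle | hle
    · obtain ⟨θ, _, hθ⟩ := intermediate_value_Icc (le_of_lt pi_pos) hDc.continuousOn
        (Set.mem_Icc.2 ⟨hle, by rw [hDpi]; linarith⟩)
      exact ⟨θ, hθ⟩
    · obtain ⟨θ, _, hθ⟩ := intermediate_value_Icc' (le_of_lt pi_pos) hDc.continuousOn
        (Set.mem_Icc.2 ⟨by rw [hDpi]; linarith, hle⟩)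
      exact ⟨θ, hθ⟩
  obtain ⟨θ, hθ⟩ := hzero
  have heq : tMed xu yu θ = tMed xw yw θ := by
    simp only [hD_def] at hθ; linarith
  rcases le_total (tMed xu yu θ) 0 with ht | ht
  · exact hno θ ⟨⟨ht, hMU θ⟩, ⟨heq ▸ ht, hMW θ⟩⟩
  · refine hno (θ + π) ⟨⟨?_, hMU _⟩, ⟨?_, hMW _⟩⟩
    · rw [tMed_add_pi]; linarith
    · rw [tMed_add_pi]; rw [heq] at ht; linarith

/-- convert the good-angle data into a sign pattern -/
lemma selector' (x y : Fin 3 → ℝ) (θ : ℝ) (h1 : tMed x y θ ≤ 0) (h2 : 0 ≤ tMax x y θ) :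
    ∃ i : Fin 3, 0 ≤ tC x y θ i ∧ ∀ k, k ≠ i → tC x y θ k ≤ 0 := by
  rcases med3_selector (h1 : med3 _ _ _ ≤ 0) (h2 : 0 ≤ max3 _ _ _) with
    ⟨ha, hb, hc⟩ | ⟨ha, hb, hc⟩ | ⟨ha, hb, hc⟩
  · exact ⟨0, ha, by intro k hk; fin_cases k <;> simp_all⟩
  · exact ⟨1, ha, by intro k hk; fin_cases k <;> simp_all⟩
  · exact ⟨2, ha, by intro k hk; fin_cases k <;> simp_all⟩


/-- two independent elements in a kernel of dimension at least two -/
lemma exists_indep_pair_ker {V W : Type*} [AddCommGroup V] [Module ℝ V]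
    [AddCommGroup W] [Module ℝ W] [FiniteDimensional ℝ V]
    (T : V →ₗ[ℝ] W) (h2 : 2 ≤ Module.finrank ℝ (LinearMap.ker T)) :
    ∃ p q : V, T p = 0 ∧ T q = 0 ∧
      ∀ c d : ℝ, c • p + d • q = 0 → c = 0 ∧ d = 0 := by
  classical
  set K := LinearMap.ker T with hK
  have : FiniteDimensional ℝ K := inferInstance
  let bK := Module.finBasis ℝ K
  let e : Fin 2 → Fin (Module.finrank ℝ K) := fun i => ⟨i, by omega⟩
  have he : Function.Injective e := by
    intro a b hab
    exact Fin.ext (by simpa using congrArg Fin.val hab)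
  have hli : LinearIndependent ℝ (fun i : Fin 2 => bK (e i)) :=
    bK.linearIndependent.comp e he
  refine ⟨(bK (e 0) : V), (bK (e 1) : V), (bK (e 0)).2, (bK (e 1)).2, ?_⟩
  intro c d hcd
  have hK0 : c • bK (e 0) + d • bK (e 1) = 0 := by
    apply Subtype.ext
    simpa using hcd
  have := Fintype.linearIndependent_iff.1 hli ![c, d] (by
    simpa [Fin.sum_univ_two] using hK0)
  exact ⟨this 0, this 1⟩

/-- the final sign contradiction -/
lemma final_contra (u w : Fin 3 → EuclideanSpace ℝ (Fin 3)) (A B : Fin 3 → ℝ) (i j : Fin 3)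
    (hz1 : ∑ k, A k • u k + ∑ l, B l • w l = 0)
    (hz2 : (∑ k, A k) + (∑ l, B l) = 0)
    (hAi : 0 ≤ A i) (hAk : ∀ k, k ≠ i → A k ≤ 0)
    (hBj : 0 ≤ B j) (hBl : ∀ l, l ≠ j → B l ≤ 0)
    (a : EuclideanSpace ℝ (Fin 3)) (b : ℝ)
    (hbu : b ≤ ⟪a, u i⟫) (hbw : b ≤ ⟪a, w j⟫)
    (hult : ∀ k, k ≠ i → ⟪a, u k⟫ < b) (hwlt : ∀ l, l ≠ j → ⟪a, w l⟫ < b) :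
    A = 0 ∧ B = 0 := by
  classical
  set F : Fin 3 → ℝ := fun k => A k * (⟪a, u k⟫ - b) with hF_def
  set G : Fin 3 → ℝ := fun l => B l * (⟪a, w l⟫ - b) with hG_def
  have hFnn : ∀ k, 0 ≤ F k := by
    intro k
    by_cases hk : k = i
    · subst hk; exact mul_nonneg hAi (by linarith)
    · have h1 : A k ≤ 0 := hAk k hk
      have h2 : ⟪a, u k⟫ - b ≤ 0 := by linarith [hult k hk]
      have h3 := mul_nonneg (neg_nonneg.2 h1) (neg_nonneg.2 h2)
      rw [neg_mul_neg] at h3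
      exact h3
  have hGnn : ∀ l, 0 ≤ G l := by
    intro l
    by_cases hl : l = j
    · subst hl; exact mul_nonneg hBj (by linarith)
    · have h1 : B l ≤ 0 := hBl l hl
      have h2 : ⟪a, w l⟫ - b ≤ 0 := by linarith [hwlt l hl]
      have h3 := mul_nonneg (neg_nonneg.2 h1) (neg_nonneg.2 h2)
      rw [neg_mul_neg] at h3
      exact h3
  have hinner : (∑ k, A k * ⟪a, u k⟫) + (∑ l, B l * ⟪a, w l⟫) = 0 := by
    have h0 : ⟪a, ∑ k, A k • u k + ∑ l, B l • w l⟫ = (0:ℝ) := by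
      rw [hz1, inner_zero_right]
    rw [inner_add_right, inner_sum, inner_sum] at h0
    simp only [real_inner_smul_right] at h0
    exact h0
  have hsumFG : (∑ k, F k) + (∑ l, G l) = 0 := by
    have e1 : ∑ k, F k = (∑ k, A k * ⟪a, u k⟫) - (∑ k, b * A k) := by
      rw [← Finset.sum_sub_distrib]
      exact Finset.sum_congr rfl (fun k _ => by simp [hF_def]; ring)
    have e2 : ∑ l, G l = (∑ l, B l * ⟪a, w l⟫) - (∑ l, b * B l) := by
      rw [← Finset.sum_sub_distrib]
      exact Finset.sum_congr rfl (fun l _ => by simp [hG_def]; ring)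
    have e3 : (∑ k, b * A k) + (∑ l, b * B l) = 0 := by
      rw [← Finset.mul_sum, ← Finset.mul_sum, ← mul_add, hz2, mul_zero]
    rw [e1, e2]
    linarith
  have hFzero : ∀ k, F k = 0 := by
    have h1 : 0 ≤ ∑ k, F k := Finset.sum_nonneg (fun k _ => hFnn k)
    have h2 : 0 ≤ ∑ l, G l := Finset.sum_nonneg (fun l _ => hGnn l)
    have h3 : ∑ k, F k = 0 := by linarith
    exact fun k => (Finset.sum_eq_zero_iff_of_nonneg (fun k _ => hFnn k)).1 h3 k
      (Finset.mem_univ k)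
  have hGzero : ∀ l, G l = 0 := by
    have h1 : 0 ≤ ∑ k, F k := Finset.sum_nonneg (fun k _ => hFnn k)
    have h2 : 0 ≤ ∑ l, G l := Finset.sum_nonneg (fun l _ => hGnn l)
    have h3 : ∑ l, G l = 0 := by linarith
    exact fun l => (Finset.sum_eq_zero_iff_of_nonneg (fun l _ => hGnn l)).1 h3 l
      (Finset.mem_univ l)
  have hAzero : ∀ k, k ≠ i → A k = 0 := by
    intro k hk
    have h2 : ⟪a, u k⟫ - b < 0 := by linarith [hult k hk]
    rcases mul_eq_zero.1 (hFzero k) with hc | hc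
    · exact hc
    · exact absurd hc h2.ne
  have hBzero : ∀ l, l ≠ j → B l = 0 := by
    intro l hl
    have h2 : ⟪a, w l⟫ - b < 0 := by linarith [hwlt l hl]
    rcases mul_eq_zero.1 (hGzero l) with hc | hc
    · exact hc
    · exact absurd hc h2.ne
  have hsumA : ∑ k, A k = A i :=
    Finset.sum_eq_single i (fun k _ hk => hAzero k hk) (fun hni => absurd (Finset.mem_univ i) hni)
  have hsumB : ∑ l, B l = B j :=
    Finset.sum_eq_single j (fun l _ hl => hBzero l hl) (fun hnj => absurd (Finset.mem_univ j) hnj)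
  have hAi0 : A i = 0 := by rw [hsumA, hsumB] at hz2; linarith
  have hBj0 : B j = 0 := by rw [hsumA, hsumB] at hz2; linarith
  constructor
  · funext k
    by_cases hk : k = i
    · rw [hk]; exact hAi0
    · exact hAzero k hk
  · funext l
    by_cases hl : l = j
    · rw [hl]; exact hBj0
    · exact hBzero l hl

/-- the linear map whose kernel encodes affine dependencies of the six points -/
def depMap (u w : Fin 3 → EuclideanSpace ℝ (Fin 3)) : ((Fin 3 → ℝ) × (Fin 3 → ℝ)) →ₗ[ℝ] (EuclideanSpace ℝ (Fin 3)) × ℝ where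
  toFun p := (∑ i, p.1 i • u i + ∑ j, p.2 j • w j, (∑ i, p.1 i) + (∑ j, p.2 j))
  map_add' p q := by
    rw [Prod.mk.injEq]
    constructor
    · simp only [Prod.fst_add, Prod.snd_add, Pi.add_apply, add_smul, Finset.sum_add_distrib]
      abel
    · simp only [Prod.fst_add, Prod.snd_add, Pi.add_apply, Finset.sum_add_distrib]
      ring
  map_smul' c p := by
    rw [RingHom.id_apply, Prod.smul_mk, Prod.mk.injEq]
    constructor
    · simp only [Prod.smul_fst, Prod.smul_snd, Pi.smul_apply, smul_eq_mul, mul_smul,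
        ← Finset.smul_sum, smul_add]
    · simp only [Prod.smul_fst, Prod.smul_snd, Pi.smul_apply, smul_eq_mul,
        ← Finset.mul_sum, mul_add]

/-- One cannot place six points u₁,u₂,u₃,w₁,w₂,w₃ in ℝ³ so that for every pair (i,j)
some closed half-space contains u_i and w_j but none of the other four points. -/
theorem no_K33_halfspace_separation_points
    (u w : Fin 3 → EuclideanSpace ℝ (Fin 3)) :
    ¬ ∀ i j : Fin 3, ∃ (a : EuclideanSpace ℝ (Fin 3)) (b : ℝ), a ≠ 0 ∧
        b ≤ ⟪a, u i⟫ ∧ b ≤ ⟪a, w j⟫ ∧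
        (∀ k, k ≠ i → ⟪a, u k⟫ < b) ∧
        (∀ l, l ≠ j → ⟪a, w l⟫ < b) := by
  intro h
  classical
  have hrank : 2 ≤ Module.finrank ℝ (LinearMap.ker (depMap u w)) := by
    have h1 := LinearMap.finrank_range_add_finrank_ker (depMap u w)
    have h2 : Module.finrank ℝ (LinearMap.range (depMap u w))
        ≤ Module.finrank ℝ ((EuclideanSpace ℝ (Fin 3)) × ℝ) := Submodule.finrank_le _
    have h3 : Module.finrank ℝ ((EuclideanSpace ℝ (Fin 3)) × ℝ) = 4 := by
      rw [Module.finrank_prod, finrank_euclideanSpace_fin, Module.finrank_self]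
    have h4 : Module.finrank ℝ ((Fin 3 → ℝ) × (Fin 3 → ℝ)) = 6 := by
      rw [Module.finrank_prod, Module.finrank_fin_fun]
    omega
  obtain ⟨p, q, hkp, hkq, hindep⟩ := exists_indep_pair_ker (depMap u w) hrank
  have hE1 : ∑ i, p.1 i • u i + ∑ j, p.2 j • w j = 0 := congrArg Prod.fst hkp
  have hE2 : ∑ i, q.1 i • u i + ∑ j, q.2 j • w j = 0 := congrArg Prod.fst hkq
  have hs1 : (∑ i, p.1 i) + (∑ j, p.2 j) = 0 := congrArg Prod.snd hkp
  have hs2 : (∑ i, q.1 i) + (∑ j, q.2 j) = 0 := congrArg Prod.snd hkq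
  obtain ⟨θ, ⟨hgu1, hgu2⟩, ⟨hgw1, hgw2⟩⟩ := exists_good_angle p.1 q.1 p.2 q.2 hs1 hs2
  obtain ⟨i, hAi, hAk⟩ := selector' p.1 q.1 θ hgu1 hgu2
  obtain ⟨j, hBj, hBl⟩ := selector' p.2 q.2 θ hgw1 hgw2
  obtain ⟨a, b, hane, hbu, hbw, hult, hwlt⟩ := h i j
  -- combined dependency coefficients
  have hz1 : ∑ k, tC p.1 q.1 θ k • u k + ∑ l, tC p.2 q.2 θ l • w l = 0 := by
    have expand : ∑ k, tC p.1 q.1 θ k • u k + ∑ l, tC p.2 q.2 θ l • w l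
        = cos θ • (∑ i, p.1 i • u i + ∑ j, p.2 j • w j)
          + sin θ • (∑ i, q.1 i • u i + ∑ j, q.2 j • w j) := by
      simp only [tC, add_smul, mul_smul, Finset.sum_add_distrib, ← Finset.smul_sum, smul_add]
      abel
    rw [expand, hE1, hE2, smul_zero, smul_zero, add_zero]
  have hz2 : (∑ k, tC p.1 q.1 θ k) + (∑ l, tC p.2 q.2 θ l) = 0 := by
    have expand : (∑ k, tC p.1 q.1 θ k) + (∑ l, tC p.2 q.2 θ l)
        = cos θ * ((∑ i, p.1 i) + (∑ j, p.2 j)) + sin θ * ((∑ i, q.1 i) + (∑ j, q.2 j)) := by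
      simp only [tC, Finset.sum_add_distrib, ← Finset.mul_sum]
      ring
    rw [expand, hs1, hs2, mul_zero, mul_zero, add_zero]
  obtain ⟨hA0, hB0⟩ := final_contra u w (tC p.1 q.1 θ) (tC p.2 q.2 θ) i j hz1 hz2
    hAi hAk hBj hBl a b hbu hbw hult hwlt
  -- hence cos θ • p + sin θ • q = 0, contradicting independence
  have hcomb : cos θ • p + sin θ • q = 0 := by
    apply Prod.ext
    · funext k
      have := congrFun hA0 k
      simpa [tC] using this
    · funext l
      have := congrFun hB0 l
      simpa [tC] using this
  obtain ⟨hc, hs⟩ := hindep _ _ hcomb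
  have hone := sin_sq_add_cos_sq θ
  rw [hc, hs] at hone
  norm_num at hone


end
end

section
/- It is impossible to find three half-spaces u₁, u₂, u₃ in ℝ³, another three half-spaces w₁, w₂, w₃ in ℝ³, and nine points q_{ij} (1 ≤ i, j ≤ 3) such that each q_{ij} lies in u_i and in w_j but in none of the other four half-spaces among u₁, u₂, u₃, w₁, w₂, w₃. -/
open scoped RealInnerProductSpace

namespace NoK33Aux

noncomputable def med3 (a b c : ℝ) : ℝ := max (min a b) (max (min a c) (min b c))

def perm6 (a b c : ℝ) : Prop :=
  (a = 0 ∧ ((b ≤ 0 ∧ 0 ≤ c) ∨ (c ≤ 0 ∧ 0 ≤ b))) ∨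
  (b = 0 ∧ ((a ≤ 0 ∧ 0 ≤ c) ∨ (c ≤ 0 ∧ 0 ≤ a))) ∨
  (c = 0 ∧ ((a ≤ 0 ∧ 0 ≤ b) ∨ (b ≤ 0 ∧ 0 ≤ a)))

set_option maxHeartbeats 3000000 in
lemma med3_neg (a b c : ℝ) : med3 (-a) (-b) (-c) = - med3 a b c := by
  simp only [med3, min_def, max_def]
  split_ifs <;> linarith

lemma perm6_of_med3 {a b c : ℝ} (h : med3 a b c = 0) : perm6 a b c := by
  simp only [med3, min_def, max_def] at h
  unfold perm6
  split_ifs at h <;>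
    first
      | exact Or.inl ⟨by linarith, Or.inl ⟨by linarith, by linarith⟩⟩
      | exact Or.inl ⟨by linarith, Or.inr ⟨by linarith, by linarith⟩⟩
      | exact Or.inr (Or.inl ⟨by linarith, Or.inl ⟨by linarith, by linarith⟩⟩)
      | exact Or.inr (Or.inl ⟨by linarith, Or.inr ⟨by linarith, by linarith⟩⟩)
      | exact Or.inr (Or.inr ⟨by linarith, Or.inl ⟨by linarith, by linarith⟩⟩)
      | exact Or.inr (Or.inr ⟨by linarith, Or.inr ⟨by linarith, by linarith⟩⟩)

lemma med3_of_perm6 {a b c : ℝ} (h : perm6 a b c) : med3 a b c = 0 := by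
  simp only [med3, min_def, max_def]
  rcases h with ⟨h0, ⟨h1, h2⟩|⟨h1, h2⟩⟩ | ⟨h0, ⟨h1, h2⟩|⟨h1, h2⟩⟩ | ⟨h0, ⟨h1, h2⟩|⟨h1, h2⟩⟩ <;>
    split_ifs <;> linarith

lemma perm6_smul {a b c s : ℝ} (h : perm6 a b c) (hs : 0 ≤ s) :
    perm6 (s * a) (s * b) (s * c) := by
  have key : ∀ x : ℝ, x ≤ 0 → s * x ≤ 0 := fun x hx => mul_nonpos_iff.mpr (Or.inl ⟨hs, hx⟩)
  have key2 : ∀ x : ℝ, 0 ≤ x → 0 ≤ s * x := fun x hx => mul_nonneg hs hx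
  rcases h with ⟨h0, ⟨h1, h2⟩|⟨h1, h2⟩⟩ | ⟨h0, ⟨h1, h2⟩|⟨h1, h2⟩⟩ | ⟨h0, ⟨h1, h2⟩|⟨h1, h2⟩⟩
  · exact Or.inl ⟨by rw [h0, mul_zero], Or.inl ⟨key _ h1, key2 _ h2⟩⟩
  · exact Or.inl ⟨by rw [h0, mul_zero], Or.inr ⟨key _ h1, key2 _ h2⟩⟩
  · exact Or.inr (Or.inl ⟨by rw [h0, mul_zero], Or.inl ⟨key _ h1, key2 _ h2⟩⟩)
  · exact Or.inr (Or.inl ⟨by rw [h0, mul_zero], Or.inr ⟨key _ h1, key2 _ h2⟩⟩)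
  · exact Or.inr (Or.inr ⟨by rw [h0, mul_zero], Or.inl ⟨key _ h1, key2 _ h2⟩⟩)
  · exact Or.inr (Or.inr ⟨by rw [h0, mul_zero], Or.inr ⟨key _ h1, key2 _ h2⟩⟩)

lemma pat_of_med3 {u : Fin 3 → ℝ} (h : med3 (u 0) (u 1) (u 2) = 0) :
    ∃ i₀ : Fin 3, 0 ≤ u i₀ ∧ ∀ k, k ≠ i₀ → u k ≤ 0 := by
  rcases perm6_of_med3 h with ⟨h0, ⟨h1, h2⟩|⟨h1, h2⟩⟩ | ⟨h0, ⟨h1, h2⟩|⟨h1, h2⟩⟩ |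
    ⟨h0, ⟨h1, h2⟩|⟨h1, h2⟩⟩
  · exact ⟨2, h2, by intro k hk; fin_cases k <;> simp_all <;> linarith⟩
  · exact ⟨1, h2, by intro k hk; fin_cases k <;> simp_all <;> linarith⟩
  · exact ⟨2, h2, by intro k hk; fin_cases k <;> simp_all <;> linarith⟩
  · exact ⟨0, h2, by intro k hk; fin_cases k <;> simp_all <;> linarith⟩
  · exact ⟨1, h2, by intro k hk; fin_cases k <;> simp_all <;> linarith⟩
  · exact ⟨0, h2, by intro k hk; fin_cases k <;> simp_all <;> linarith⟩

lemma med3_ivt {g1 g2 g3 : ℝ → ℝ} (h1 : Continuous g1) (h2 : Continuous g2)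
    (h3 : Continuous g3)
    (hp : med3 (g1 0) (g2 0) (g3 0) * med3 (g1 1) (g2 1) (g3 1) ≤ 0) :
    ∃ s ∈ Set.Icc (0:ℝ) 1, med3 (g1 s) (g2 s) (g3 s) = 0 := by
  have hc : Continuous fun s => med3 (g1 s) (g2 s) (g3 s) := by
    unfold med3
    exact Continuous.max (h1.min h2) (Continuous.max (h1.min h3) (h2.min h3))
  rcases mul_nonpos_iff.mp hp with ⟨ha, hb⟩ | ⟨ha, hb⟩
  · obtain ⟨s, hs, hfs⟩ := intermediate_value_Icc' (by norm_num : (0:ℝ) ≤ 1)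
      hc.continuousOn ⟨hb, ha⟩
    exact ⟨s, hs, hfs⟩
  · obtain ⟨s, hs, hfs⟩ := intermediate_value_Icc (by norm_num : (0:ℝ) ≤ 1)
      hc.continuousOn ⟨ha, hb⟩
    exact ⟨s, hs, hfs⟩

end NoK33Aux

namespace NoK33Aux

abbrev Pt := (Fin 3 → ℝ) × (Fin 3 → ℝ)

noncomputable def psi (κ : Fin 3 → Pt) (y : Fin 3 → ℝ) : Pt :=
  y 0 • κ 0 + y 1 • κ 1 + y 2 • κ 2

noncomputable def mU (z : Pt) : ℝ := med3 (z.1 0) (z.1 1) (z.1 2)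
noncomputable def mV (z : Pt) : ℝ := med3 (z.2 0) (z.2 1) (z.2 2)

lemma psi_comb (κ : Fin 3 → Pt) (r s : ℝ) (y₁ y₂ : Fin 3 → ℝ) :
    psi κ (r • y₁ + s • y₂) = r • psi κ y₁ + s • psi κ y₂ := by
  unfold psi
  simp only [Pi.add_apply, Pi.smul_apply, smul_eq_mul]
  module

lemma psi_neg (κ : Fin 3 → Pt) (y : Fin 3 → ℝ) : psi κ (-y) = - psi κ y := by
  unfold psi
  simp only [Pi.neg_apply]
  module

lemma mU_neg (z : Pt) : mU (-z) = - mU z := by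
  unfold mU
  rw [show (-z).1 = -(z.1) from rfl]
  simp only [Pi.neg_apply]
  exact med3_neg _ _ _

lemma mV_neg (z : Pt) : mV (-z) = - mV z := by
  unfold mV
  rw [show (-z).2 = -(z.2) from rfl]
  simp only [Pi.neg_apply]
  exact med3_neg _ _ _

lemma fst_coord_comb (κ : Fin 3 → Pt) (r s : ℝ) (y₁ y₂ : Fin 3 → ℝ) (j : Fin 3) :
    (psi κ (r • y₁ + s • y₂)).1 j = r * (psi κ y₁).1 j + s * (psi κ y₂).1 j := by
  rw [psi_comb]
  simp [Prod.fst_add, Prod.smul_fst, Pi.add_apply, Pi.smul_apply, smul_eq_mul]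

lemma snd_coord_comb (κ : Fin 3 → Pt) (r s : ℝ) (y₁ y₂ : Fin 3 → ℝ) (j : Fin 3) :
    (psi κ (r • y₁ + s • y₂)).2 j = r * (psi κ y₁).2 j + s * (psi κ y₂).2 j := by
  rw [psi_comb]
  simp [Prod.snd_add, Prod.smul_snd, Pi.add_apply, Pi.smul_apply, smul_eq_mul]

/-- IVT for mV along a segment in y-space. -/
lemma mV_ivt (κ : Fin 3 → Pt) (y₁ y₂ : Fin 3 → ℝ)
    (hp : mV (psi κ y₁) * mV (psi κ y₂) ≤ 0) :
    ∃ s ∈ Set.Icc (0:ℝ) 1, mV (psi κ ((1-s) • y₁ + s • y₂)) = 0 := by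
  have hg : ∀ j : Fin 3, Continuous fun s : ℝ => (psi κ ((1-s) • y₁ + s • y₂)).2 j := by
    intro j
    have : (fun s : ℝ => (psi κ ((1-s) • y₁ + s • y₂)).2 j)
        = fun s : ℝ => (1-s) * (psi κ y₁).2 j + s * (psi κ y₂).2 j := by
      funext s; exact snd_coord_comb κ (1-s) s y₁ y₂ j
    rw [this]
    fun_prop
  have hend0 : ∀ j : Fin 3, (psi κ ((1-(0:ℝ)) • y₁ + (0:ℝ) • y₂)).2 j = (psi κ y₁).2 j := by
    intro j; rw [snd_coord_comb]; ring
  have hend1 : ∀ j : Fin 3, (psi κ ((1-(1:ℝ)) • y₁ + (1:ℝ) • y₂)).2 j = (psi κ y₂).2 j := by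
    intro j; rw [snd_coord_comb]; ring
  obtain ⟨s, hs, h0⟩ := med3_ivt (hg 0) (hg 1) (hg 2) (by
    rw [hend0, hend0, hend0, hend1, hend1, hend1]; exact hp)
  exact ⟨s, hs, h0⟩

/-- IVT for mU along a segment in y-space. -/
lemma mU_ivt (κ : Fin 3 → Pt) (y₁ y₂ : Fin 3 → ℝ)
    (hp : mU (psi κ y₁) * mU (psi κ y₂) ≤ 0) :
    ∃ s ∈ Set.Icc (0:ℝ) 1, mU (psi κ ((1-s) • y₁ + s • y₂)) = 0 := by
  have hg : ∀ j : Fin 3, Continuous fun s : ℝ => (psi κ ((1-s) • y₁ + s • y₂)).1 j := by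
    intro j
    have : (fun s : ℝ => (psi κ ((1-s) • y₁ + s • y₂)).1 j)
        = fun s : ℝ => (1-s) * (psi κ y₁).1 j + s * (psi κ y₂).1 j := by
      funext s; exact fst_coord_comb κ (1-s) s y₁ y₂ j
    rw [this]
    fun_prop
  have hend0 : ∀ j : Fin 3, (psi κ ((1-(0:ℝ)) • y₁ + (0:ℝ) • y₂)).1 j = (psi κ y₁).1 j := by
    intro j; rw [fst_coord_comb]; ring
  have hend1 : ∀ j : Fin 3, (psi κ ((1-(1:ℝ)) • y₁ + (1:ℝ) • y₂)).1 j = (psi κ y₂).1 j := by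
    intro j; rw [fst_coord_comb]; ring
  obtain ⟨s, hs, h0⟩ := med3_ivt (hg 0) (hg 1) (hg 2) (by
    rw [hend0, hend0, hend0, hend1, hend1, hend1]; exact hp)
  exact ⟨s, hs, h0⟩

/-- Solve along a segment: if mU vanishes on the whole segment, the segment avoids 0,
and mV changes sign, then some point works. -/
lemma goal_of_seg (κ : Fin 3 → Pt) (y₁ y₂ : Fin 3 → ℝ)
    (hm : ∀ s : ℝ, s ∈ Set.Icc (0:ℝ) 1 → mU (psi κ ((1-s) • y₁ + s • y₂)) = 0)
    (hnz : ∀ s : ℝ, s ∈ Set.Icc (0:ℝ) 1 → psi κ ((1-s) • y₁ + s • y₂) ≠ 0)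
    (hp : mV (psi κ y₁) * mV (psi κ y₂) ≤ 0) :
    ∃ y : Fin 3 → ℝ, psi κ y ≠ 0 ∧ mU (psi κ y) = 0 ∧ mV (psi κ y) = 0 := by
  obtain ⟨s, hs, h0⟩ := mV_ivt κ y₁ y₂ hp
  exact ⟨(1-s) • y₁ + s • y₂, hnz s hs, hm s hs, h0⟩

end NoK33Aux

namespace NoK33Aux

open Matrix

lemma exists_good (κ : Fin 3 → Pt)
    (hψnz : ∀ y : Fin 3 → ℝ, y ≠ 0 → psi κ y ≠ 0) :
    ∃ y : Fin 3 → ℝ, psi κ y ≠ 0 ∧ mU (psi κ y) = 0 ∧ mV (psi κ y) = 0 := by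
  classical
  set M : Matrix (Fin 3) (Fin 3) ℝ := Matrix.of (fun r c => (κ c).1 r) with hMdef
  have hMV : ∀ (y : Fin 3 → ℝ) (r : Fin 3), M.mulVec y r = (psi κ y).1 r := by
    intro y r
    show (fun j => M r j) ⬝ᵥ y = _
    rw [dotProduct, Fin.sum_univ_three]
    simp only [hMdef, Matrix.of_apply, psi, Prod.fst_add, Prod.smul_fst,
      Pi.add_apply, Pi.smul_apply, smul_eq_mul]
    ring
  by_cases hdet : M.det = 0
  · -- CASE A : singular matrix
    obtain ⟨y₀, hy₀ne, hy₀⟩ := (Matrix.exists_mulVec_eq_zero_iff).mpr hdet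
    have hw1 : ∀ r : Fin 3, (psi κ y₀).1 r = 0 := by
      intro r; rw [← hMV, hy₀]; rfl
    obtain ⟨m, hm⟩ := Function.ne_iff.mp hy₀ne
    simp only [Pi.zero_apply] at hm
    obtain ⟨p, q, hpm, hqm, hpq⟩ : ∃ p q : Fin 3, p ≠ m ∧ q ≠ m ∧ p ≠ q := by
      fin_cases m
      exacts [⟨1, 2, by decide, by decide, by decide⟩,
        ⟨0, 2, by decide, by decide, by decide⟩,
        ⟨0, 1, by decide, by decide, by decide⟩]
    set ep : Fin 3 → ℝ := Pi.single p 1 with hep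
    set eq' : Fin 3 → ℝ := Pi.single q 1 with heq'
    -- find yhat with (yhat m = 0), yhat ≠ 0, mU (psi yhat) = 0
    have hinner : ∃ yh : Fin 3 → ℝ, yh m = 0 ∧ yh ≠ 0 ∧ mU (psi κ yh) = 0 := by
      rcases le_total (mU (psi κ ep) * mU (psi κ eq')) 0 with hcase | hcase
      · obtain ⟨s, hs, h0⟩ := mU_ivt κ ep eq' hcase
        refine ⟨(1-s) • ep + s • eq', ?_, ?_, h0⟩
        · simp [hep, heq', Pi.single_eq_of_ne (Ne.symm hpm), Pi.single_eq_of_ne (Ne.symm hqm)]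
        · intro h
          have hpp := congrFun h p
          have hqq := congrFun h q
          simp only [hep, heq', Pi.add_apply, Pi.smul_apply, smul_eq_mul,
            Pi.single_eq_same, Pi.single_eq_of_ne hpq, Pi.single_eq_of_ne (Ne.symm hpq),
            Pi.zero_apply, mul_zero, mul_one, add_zero, zero_add] at hpp hqq
          linarith
      · have hcase' : mU (psi κ eq') * mU (psi κ (-ep)) ≤ 0 := by
          rw [psi_neg, mU_neg]; nlinarith
        obtain ⟨s, hs, h0⟩ := mU_ivt κ eq' (-ep) hcase'
        refine ⟨(1-s) • eq' + s • (-ep), ?_, ?_, h0⟩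
        · simp [hep, heq', Pi.single_eq_of_ne (Ne.symm hpm), Pi.single_eq_of_ne (Ne.symm hqm)]
        · intro h
          have hpp := congrFun h p
          have hqq := congrFun h q
          simp only [hep, heq', Pi.add_apply, Pi.smul_apply, Pi.neg_apply, smul_eq_mul,
            Pi.single_eq_same, Pi.single_eq_of_ne hpq, Pi.single_eq_of_ne (Ne.symm hpq),
            Pi.zero_apply, mul_zero, mul_one, add_zero, zero_add, mul_neg, neg_zero] at hpp hqq
          linarith
    obtain ⟨yh, hyhm, hyhne, hyhU⟩ := hinner
    -- outer loop: vertices y₀, yh, -y₀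
    have husc : ∀ (r s : ℝ) (j : Fin 3),
        (psi κ (r • y₀ + s • yh)).1 j = s * (psi κ yh).1 j := by
      intro r s j
      rw [fst_coord_comb, hw1, mul_zero, zero_add]
    have hyhperm : perm6 ((psi κ yh).1 0) ((psi κ yh).1 1) ((psi κ yh).1 2) :=
      perm6_of_med3 hyhU
    have hseg1m : ∀ s : ℝ, s ∈ Set.Icc (0:ℝ) 1 → mU (psi κ ((1-s) • y₀ + s • yh)) = 0 := by
      intro s hs
      unfold mU
      rw [husc, husc, husc]
      exact med3_of_perm6 (perm6_smul hyhperm hs.1)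
    have hseg1nz : ∀ s : ℝ, s ∈ Set.Icc (0:ℝ) 1 → psi κ ((1-s) • y₀ + s • yh) ≠ 0 := by
      intro s hs
      apply hψnz
      intro h
      by_cases hs1 : s = 1
      · subst hs1
        have := congrFun h
        apply hyhne
        funext j
        have hj := congrFun h j
        simpa using hj
      · have hj := congrFun h m
        simp only [Pi.add_apply, Pi.smul_apply, smul_eq_mul, hyhm, mul_zero, add_zero,
          Pi.zero_apply] at hj
        have h1s : 1 - s ≠ 0 := fun hc => hs1 (by linarith)
        rcases mul_eq_zero.mp hj with h' | h'
        · exact h1s h'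
        · exact hm h'
    -- second segment: yh → -y₀
    have husc2 : ∀ (r s : ℝ) (j : Fin 3),
        (psi κ (r • yh + s • (-y₀))).1 j = r * (psi κ yh).1 j := by
      intro r s j
      rw [fst_coord_comb, psi_neg]
      have : (-(psi κ y₀)).1 j = 0 := by
        rw [show (-(psi κ y₀)).1 = -((psi κ y₀).1) from rfl]
        simp [hw1]
      rw [this, mul_zero, add_zero]
    have hseg2m : ∀ s : ℝ, s ∈ Set.Icc (0:ℝ) 1 → mU (psi κ ((1-s) • yh + s • (-y₀))) = 0 := by
      intro s hs
      unfold mU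
      rw [husc2, husc2, husc2]
      exact med3_of_perm6 (perm6_smul hyhperm (by linarith [hs.2]))
    have hseg2nz : ∀ s : ℝ, s ∈ Set.Icc (0:ℝ) 1 → psi κ ((1-s) • yh + s • (-y₀)) ≠ 0 := by
      intro s hs
      apply hψnz
      intro h
      by_cases hs0 : s = 0
      · subst hs0
        apply hyhne
        funext j
        have hj := congrFun h j
        simpa using hj
      · have hj := congrFun h m
        simp only [Pi.add_apply, Pi.smul_apply, Pi.neg_apply, smul_eq_mul, hyhm, mul_zero,
          zero_add, Pi.zero_apply] at hj
        rcases mul_eq_zero.mp hj with h' | h'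
        · exact hs0 h'
        · exact hm (by linarith)
    rcases le_total (mV (psi κ y₀) * mV (psi κ yh)) 0 with hcase | hcase
    · exact goal_of_seg κ y₀ yh hseg1m hseg1nz hcase
    · apply goal_of_seg κ yh (-y₀) hseg2m hseg2nz
      rw [psi_neg, mV_neg]
      nlinarith
  · -- CASE B : invertible matrix, hexagon
    have hdetu : IsUnit M.det := isUnit_iff_ne_zero.mpr hdet
    set pc : Fin 3 → (Fin 3 → ℝ) := fun c => (M⁻¹).mulVec (Pi.single c 1) with hpc
    have hB : ∀ (c : Fin 3) (r : Fin 3), (psi κ (pc c)).1 r = (Pi.single c 1 : Fin 3 → ℝ) r := by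
      intro c r
      rw [← hMV, hpc]
      show (M *ᵥ M⁻¹ *ᵥ (Pi.single c 1 : Fin 3 → ℝ)) r = _
      rw [Matrix.mulVec_mulVec, Matrix.mul_nonsing_inv _ hdetu, Matrix.one_mulVec]
    -- the three segments of the half-hexagon
    have hcoords1 : ∀ s : ℝ,
        (psi κ ((1-s) • pc 0 + s • (-(pc 1)))).1 0 = (1-s)
        ∧ (psi κ ((1-s) • pc 0 + s • (-(pc 1)))).1 1 = -s
        ∧ (psi κ ((1-s) • pc 0 + s • (-(pc 1)))).1 2 = 0 := by
      intro s
      refine ⟨?_, ?_, ?_⟩ <;>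
      · rw [fst_coord_comb, psi_neg,
          show (-(psi κ (pc 1))).1 = -((psi κ (pc 1)).1) from rfl]
        simp [hB, Pi.single_eq_same, Pi.single_eq_of_ne]
    have hcoords2 : ∀ s : ℝ,
        (psi κ ((1-s) • (-(pc 1)) + s • pc 2)).1 0 = 0
        ∧ (psi κ ((1-s) • (-(pc 1)) + s • pc 2)).1 1 = -(1-s)
        ∧ (psi κ ((1-s) • (-(pc 1)) + s • pc 2)).1 2 = s := by
      intro s
      refine ⟨?_, ?_, ?_⟩ <;>
      · rw [fst_coord_comb, psi_neg,
          show (-(psi κ (pc 1))).1 = -((psi κ (pc 1)).1) from rfl]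
        simp [hB, Pi.single_eq_same, Pi.single_eq_of_ne]
    have hcoords3 : ∀ s : ℝ,
        (psi κ ((1-s) • pc 2 + s • (-(pc 0)))).1 0 = -s
        ∧ (psi κ ((1-s) • pc 2 + s • (-(pc 0)))).1 1 = 0
        ∧ (psi κ ((1-s) • pc 2 + s • (-(pc 0)))).1 2 = (1-s) := by
      intro s
      refine ⟨?_, ?_, ?_⟩ <;>
      · rw [fst_coord_comb, psi_neg,
          show (-(psi κ (pc 0))).1 = -((psi κ (pc 0)).1) from rfl]
        simp [hB, Pi.single_eq_same, Pi.single_eq_of_ne]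
    have hseg1m : ∀ s : ℝ, s ∈ Set.Icc (0:ℝ) 1 →
        mU (psi κ ((1-s) • pc 0 + s • (-(pc 1)))) = 0 := by
      intro s hs
      obtain ⟨h0, h1, h2⟩ := hcoords1 s
      unfold mU
      rw [h0, h1, h2]
      exact med3_of_perm6 (Or.inr (Or.inr ⟨rfl, Or.inr ⟨by linarith [hs.1], by linarith [hs.2]⟩⟩))
    have hseg2m : ∀ s : ℝ, s ∈ Set.Icc (0:ℝ) 1 →
        mU (psi κ ((1-s) • (-(pc 1)) + s • pc 2)) = 0 := by
      intro s hs
      obtain ⟨h0, h1, h2⟩ := hcoords2 s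
      unfold mU
      rw [h0, h1, h2]
      exact med3_of_perm6 (Or.inl ⟨rfl, Or.inl ⟨by linarith [hs.2], by linarith [hs.1]⟩⟩)
    have hseg3m : ∀ s : ℝ, s ∈ Set.Icc (0:ℝ) 1 →
        mU (psi κ ((1-s) • pc 2 + s • (-(pc 0)))) = 0 := by
      intro s hs
      obtain ⟨h0, h1, h2⟩ := hcoords3 s
      unfold mU
      rw [h0, h1, h2]
      exact med3_of_perm6 (Or.inr (Or.inl ⟨rfl, Or.inl ⟨by linarith [hs.1], by linarith [hs.2]⟩⟩))
    have hseg1nz : ∀ s : ℝ, s ∈ Set.Icc (0:ℝ) 1 →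
        psi κ ((1-s) • pc 0 + s • (-(pc 1))) ≠ 0 := by
      intro s hs h
      obtain ⟨h0, h1, h2⟩ := hcoords1 s
      rw [h] at h0 h1
      simp only [Prod.fst_zero, Pi.zero_apply] at h0 h1
      linarith [h0, h1]
    have hseg2nz : ∀ s : ℝ, s ∈ Set.Icc (0:ℝ) 1 →
        psi κ ((1-s) • (-(pc 1)) + s • pc 2) ≠ 0 := by
      intro s hs h
      obtain ⟨h0, h1, h2⟩ := hcoords2 s
      rw [h] at h1 h2
      simp only [Prod.fst_zero, Pi.zero_apply] at h1 h2
      linarith [h1, h2]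
    have hseg3nz : ∀ s : ℝ, s ∈ Set.Icc (0:ℝ) 1 →
        psi κ ((1-s) • pc 2 + s • (-(pc 0))) ≠ 0 := by
      intro s hs h
      obtain ⟨h0, h1, h2⟩ := hcoords3 s
      rw [h] at h0 h2
      simp only [Prod.fst_zero, Pi.zero_apply] at h0 h2
      linarith [h0, h2]
    set m₁ := mV (psi κ (pc 0)) with hm₁
    set m₂ := mV (psi κ (-(pc 1))) with hm₂
    set m₃ := mV (psi κ (pc 2)) with hm₃
    have hm₄ : mV (psi κ (-(pc 0))) = -m₁ := by rw [psi_neg, mV_neg, hm₁]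
    have hchoice : m₁ * m₂ ≤ 0 ∨ m₂ * m₃ ≤ 0 ∨ m₃ * mV (psi κ (-(pc 0))) ≤ 0 := by
      by_contra hcon
      push_neg at hcon
      obtain ⟨h1, h2, h3⟩ := hcon
      rw [hm₄] at h3
      nlinarith [mul_pos (mul_pos h1 h2) h3, sq_nonneg (m₁ * m₂ * m₃)]
    rcases hchoice with hc | hc | hc
    · exact goal_of_seg κ (pc 0) (-(pc 1)) hseg1m hseg1nz hc
    · exact goal_of_seg κ (-(pc 1)) (pc 2) hseg2m hseg2nz hc
    · exact goal_of_seg κ (pc 2) (-(pc 0)) hseg3m hseg3nz hc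

end NoK33Aux


set_option maxHeartbeats 2000000 in
/-- Claim 4.1: there are no six closed half-spaces u₁,u₂,u₃,w₁,w₂,w₃ in ℝ³ and nine
points q_{ij} such that q_{ij} lies in u_i and w_j but in none of the other four
half-spaces. Half-space `i` of the `u`-family is `{x : ⟪a i, x⟫ ≥ b i}`, and
similarly for the `w`-family. -/
theorem no_K33_halfspaces
    (a : Fin 3 → EuclideanSpace ℝ (Fin 3)) (b : Fin 3 → ℝ)
    (c : Fin 3 → EuclideanSpace ℝ (Fin 3)) (d : Fin 3 → ℝ)
    (ha : ∀ i, a i ≠ 0) (hc : ∀ j, c j ≠ 0) :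
    ¬ ∃ q : Fin 3 → Fin 3 → EuclideanSpace ℝ (Fin 3),
        ∀ i j : Fin 3,
          (b i ≤ ⟪a i, q i j⟫) ∧ (d j ≤ ⟪c j, q i j⟫) ∧
          (∀ k, k ≠ i → ⟪a k, q i j⟫ < b k) ∧
          (∀ l, l ≠ j → ⟪c l, q i j⟫ < d l) := by

  rintro ⟨q, hq⟩
  classical
  let T : ((Fin 3 → ℝ) × (Fin 3 → ℝ)) →ₗ[ℝ] EuclideanSpace ℝ (Fin 3) :=
    { toFun := fun z => z.1 0 • a 0 + z.1 1 • a 1 + z.1 2 • a 2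
        + z.2 0 • c 0 + z.2 1 • c 1 + z.2 2 • c 2
      map_add' := by
        intro x y
        simp only [Prod.fst_add, Prod.snd_add, Pi.add_apply, add_smul]
        module
      map_smul' := by
        intro r x
        simp only [Prod.smul_fst, Prod.smul_snd, Pi.smul_apply, smul_eq_mul,
          RingHom.id_apply, mul_smul]
        module }
  have hTapp : ∀ z : (Fin 3 → ℝ) × (Fin 3 → ℝ),
      T z = z.1 0 • a 0 + z.1 1 • a 1 + z.1 2 • a 2
        + z.2 0 • c 0 + z.2 1 • c 1 + z.2 2 • c 2 := fun z => rfl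
  have hdim : 3 ≤ Module.finrank ℝ (LinearMap.ker T) := by
    have h1 := LinearMap.finrank_range_add_finrank_ker T
    have h2 : Module.finrank ℝ (LinearMap.range T) ≤ 3 := by
      have h3 := Submodule.finrank_le (LinearMap.range T)
      simpa [finrank_euclideanSpace_fin] using h3
    have h3 : Module.finrank ℝ ((Fin 3 → ℝ) × (Fin 3 → ℝ)) = 6 := by
      simp [Module.finrank_prod]
    omega
  let B := Module.finBasis ℝ (LinearMap.ker T)
  have hi : ∀ cv : Fin 3, (cv : ℕ) < Module.finrank ℝ (LinearMap.ker T) :=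
    fun cv => lt_of_lt_of_le cv.2 hdim
  let κ : Fin 3 → NoK33Aux.Pt := fun cv => ((B ⟨cv.1, hi cv⟩ : LinearMap.ker T) : _)
  have hTκ : ∀ cv, T (κ cv) = 0 := fun cv => (B ⟨cv.1, hi cv⟩).2
  have hκli : LinearIndependent ℝ κ := by
    have h0 := B.linearIndependent
    have h1 := h0.map' (LinearMap.ker T).subtype (Submodule.ker_subtype _)
    have h2 : κ = (fun i => ((LinearMap.ker T).subtype (B i)))
        ∘ (fun cv : Fin 3 => (⟨cv.1, hi cv⟩ : Fin (Module.finrank ℝ (LinearMap.ker T)))) := rfl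
    rw [h2]
    exact h1.comp _ (fun x y hxy => Fin.ext (by simpa using congrArg Fin.val hxy))
  have hψnz : ∀ y : Fin 3 → ℝ, y ≠ 0 → NoK33Aux.psi κ y ≠ 0 := by
    intro y hy h0
    have hsum : ∑ i : Fin 3, y i • κ i = 0 := by
      rw [Fin.sum_univ_three]; exact h0
    have hz := Fintype.linearIndependent_iff.mp hκli y hsum
    exact hy (funext hz)
  obtain ⟨yg, hgne, hgU, hgV⟩ := NoK33Aux.exists_good κ hψnz
  have hTz : T (NoK33Aux.psi κ yg) = 0 := by
    unfold NoK33Aux.psi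
    rw [map_add, map_add, map_smul, map_smul, map_smul, hTκ, hTκ, hTκ]
    simp
  have key : ∀ w : (Fin 3 → ℝ) × (Fin 3 → ℝ), T w = 0 → w ≠ 0 →
      NoK33Aux.mU w = 0 → NoK33Aux.mV w = 0 →
      0 ≤ (∑ k : Fin 3, w.1 k * b k) + (∑ k : Fin 3, w.2 k * d k) → False := by
    intro w hTw hwne hUw hVw htau
    obtain ⟨i₀, hi₀, hik⟩ := NoK33Aux.pat_of_med3 (u := w.1) hUw
    obtain ⟨j₀, hj₀, hjl⟩ := NoK33Aux.pat_of_med3 (u := w.2) hVw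
    have hinner : ∀ p : EuclideanSpace ℝ (Fin 3),
        (∑ k : Fin 3, w.1 k * ⟪a k, p⟫) + (∑ k : Fin 3, w.2 k * ⟪c k, p⟫) = 0 := by
      intro p
      have h := congrArg (fun v : EuclideanSpace ℝ (Fin 3) => ⟪v, p⟫) hTw
      simp only [hTapp, inner_zero_left, inner_add_left, real_inner_smul_left] at h
      rw [Fin.sum_univ_three, Fin.sum_univ_three]
      linarith
    obtain ⟨hb₀, hd₀, hA, hC⟩ := hq i₀ j₀
    have hterm1 : ∀ k : Fin 3, 0 ≤ w.1 k * (⟪a k, q i₀ j₀⟫ - b k) := by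
      intro k
      by_cases hk : k = i₀
      · subst hk; exact mul_nonneg hi₀ (by linarith)
      · have h1 := hik k hk
        have h2 := hA k hk
        nlinarith
    have hterm2 : ∀ k : Fin 3, 0 ≤ w.2 k * (⟪c k, q i₀ j₀⟫ - d k) := by
      intro k
      by_cases hk : k = j₀
      · subst hk; exact mul_nonneg hj₀ (by linarith)
      · have h1 := hjl k hk
        have h2 := hC k hk
        nlinarith
    have hS1 : (0:ℝ) ≤ ∑ k : Fin 3, w.1 k * (⟪a k, q i₀ j₀⟫ - b k) :=
      Finset.sum_nonneg fun k _ => hterm1 k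
    have hS2 : (0:ℝ) ≤ ∑ k : Fin 3, w.2 k * (⟪c k, q i₀ j₀⟫ - d k) :=
      Finset.sum_nonneg fun k _ => hterm2 k
    have hsplit : (∑ k : Fin 3, w.1 k * (⟪a k, q i₀ j₀⟫ - b k))
        + (∑ k : Fin 3, w.2 k * (⟪c k, q i₀ j₀⟫ - d k))
        = -((∑ k : Fin 3, w.1 k * b k) + (∑ k : Fin 3, w.2 k * d k)) := by
      have h := hinner (q i₀ j₀)
      simp only [mul_sub, Finset.sum_sub_distrib]
      linarith
    have hS1z : ∑ k : Fin 3, w.1 k * (⟪a k, q i₀ j₀⟫ - b k) = 0 := by linarith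
    have hS2z : ∑ k : Fin 3, w.2 k * (⟪c k, q i₀ j₀⟫ - d k) = 0 := by linarith
    have htz : (∑ k : Fin 3, w.1 k * b k) + (∑ k : Fin 3, w.2 k * d k) = 0 := by linarith
    have hco1 : ∀ k, k ≠ i₀ → w.1 k = 0 := by
      intro k hk
      have hall := (Finset.sum_eq_zero_iff_of_nonneg
        (fun k _ => hterm1 k)).mp hS1z k (Finset.mem_univ k)
      have h2 := hA k hk
      rcases mul_eq_zero.mp hall with h' | h'
      · exact h'
      · exfalso; linarith
    have hco2 : ∀ k, k ≠ j₀ → w.2 k = 0 := by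
      intro k hk
      have hall := (Finset.sum_eq_zero_iff_of_nonneg
        (fun k _ => hterm2 k)).mp hS2z k (Finset.mem_univ k)
      have h2 := hC k hk
      rcases mul_eq_zero.mp hall with h' | h'
      · exact h'
      · exfalso; linarith
    have hpos : 0 < w.1 i₀ ∨ 0 < w.2 j₀ := by
      rcases eq_or_lt_of_le hi₀ with h1 | h1
      · rcases eq_or_lt_of_le hj₀ with h2 | h2
        · exfalso
          apply hwne
          have e1 : w.1 = 0 := funext fun k => by
            by_cases hk : k = i₀
            · rw [hk]; exact h1.symm
            · exact hco1 k hk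
          have e2 : w.2 = 0 := funext fun k => by
            by_cases hk : k = j₀
            · rw [hk]; exact h2.symm
            · exact hco2 k hk
          exact Prod.ext e1 e2
        · exact Or.inr h2
      · exact Or.inl h1
    obtain ⟨i₁, hi₁⟩ : ∃ i₁ : Fin 3, i₀ ≠ i₁ := by
      by_cases h : i₀ = 0
      · exact ⟨1, by rw [h]; decide⟩
      · exact ⟨0, h⟩
    obtain ⟨j₁, hj₁⟩ : ∃ j₁ : Fin 3, j₀ ≠ j₁ := by
      by_cases h : j₀ = 0
      · exact ⟨1, by rw [h]; decide⟩
      · exact ⟨0, h⟩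
    have hA' := (hq i₁ j₁).2.2.1 i₀ hi₁
    have hC' := (hq i₁ j₁).2.2.2 j₀ hj₁
    have e1 : ∑ k : Fin 3, w.1 k * ⟪a k, q i₁ j₁⟫ = w.1 i₀ * ⟪a i₀, q i₁ j₁⟫ :=
      Finset.sum_eq_single_of_mem i₀ (Finset.mem_univ _)
        (fun k _ hk => by rw [hco1 k hk, zero_mul])
    have e2 : ∑ k : Fin 3, w.2 k * ⟪c k, q i₁ j₁⟫ = w.2 j₀ * ⟪c j₀, q i₁ j₁⟫ :=
      Finset.sum_eq_single_of_mem j₀ (Finset.mem_univ _)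
        (fun k _ hk => by rw [hco2 k hk, zero_mul])
    have e3 : ∑ k : Fin 3, w.1 k * b k = w.1 i₀ * b i₀ :=
      Finset.sum_eq_single_of_mem i₀ (Finset.mem_univ _)
        (fun k _ hk => by rw [hco1 k hk, zero_mul])
    have e4 : ∑ k : Fin 3, w.2 k * d k = w.2 j₀ * d j₀ :=
      Finset.sum_eq_single_of_mem j₀ (Finset.mem_univ _)
        (fun k _ hk => by rw [hco2 k hk, zero_mul])
    have hfin := hinner (q i₁ j₁)
    rw [e1, e2] at hfin
    rw [e3, e4] at htz
    rcases hpos with h | h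
    · have t1 : w.1 i₀ * (⟪a i₀, q i₁ j₁⟫ - b i₀) < 0 :=
        mul_neg_of_pos_of_neg h (by linarith)
      have t2 : w.2 j₀ * (⟪c j₀, q i₁ j₁⟫ - d j₀) ≤ 0 :=
        mul_nonpos_iff.mpr (Or.inl ⟨hj₀, by linarith⟩)
      nlinarith
    · have t1 : w.2 j₀ * (⟪c j₀, q i₁ j₁⟫ - d j₀) < 0 :=
        mul_neg_of_pos_of_neg h (by linarith)
      have t2 : w.1 i₀ * (⟪a i₀, q i₁ j₁⟫ - b i₀) ≤ 0 :=
        mul_nonpos_iff.mpr (Or.inl ⟨hi₀, by linarith⟩)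
      nlinarith
  set z := NoK33Aux.psi κ yg with hzdef
  rcases le_total 0 ((∑ k : Fin 3, z.1 k * b k) + (∑ k : Fin 3, z.2 k * d k)) with h | h
  · exact key z hTz hgne hgU hgV h
  · apply key (-z) (by rw [map_neg, hTz, neg_zero]) (neg_ne_zero.mpr hgne)
      (by rw [NoK33Aux.mU_neg, hgU, neg_zero]) (by rw [NoK33Aux.mV_neg, hgV, neg_zero])
    simp only [show (-z).1 = -(z.1) from rfl, show (-z).2 = -(z.2) from rfl, Pi.neg_apply,
      neg_mul, Finset.sum_neg_distrib]
    linarith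
end

section
/- Five points in ℝ³ in convex position (all are vertices of their convex hull) cannot have the property that every pair of them is contained in some half-space excluding the other three. -/
open scoped RealInnerProductSpace

private lemma inner_isLinearMap (a : EuclideanSpace ℝ (Fin 3)) :
    IsLinearMap ℝ (fun y : EuclideanSpace ℝ (Fin 3) => ⟪a, y⟫) :=
  ⟨fun x y => inner_add_right a x y, fun c x => real_inner_smul_right a x c⟩

private lemma aux_radon {p : Fin 5 → EuclideanSpace ℝ (Fin 3)}
    (hinj : Function.Injective p)
    (hconv : ∀ i, p i ∈ Set.extremePoints ℝ (convexHull ℝ (Set.range p)))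
    (hsep : ∀ i j : Fin 5, i ≠ j →
        ∃ (a : EuclideanSpace ℝ (Fin 3)) (b : ℝ), a ≠ 0 ∧
          b ≤ ⟪a, p i⟫ ∧ b ≤ ⟪a, p j⟫ ∧
          ∀ k, k ≠ i → k ≠ j → ⟪a, p k⟫ < b)
    {I : Set (Fin 5)} (hI : I.ncard ≤ 2) {x : EuclideanSpace ℝ (Fin 3)}
    (hx1 : x ∈ convexHull ℝ (p '' I)) (hx2 : x ∈ convexHull ℝ (p '' Iᶜ)) : False := by
  obtain h0 | h1 | h2 : I.ncard = 0 ∨ I.ncard = 1 ∨ I.ncard = 2 := by omega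
  · rw [Set.ncard_eq_zero] at h0
    subst h0
    simp at hx1
  · obtain ⟨i, rfl⟩ := Set.ncard_eq_one.1 h1
    rw [Set.image_singleton, convexHull_singleton, Set.mem_singleton_iff] at hx1
    subst hx1
    have hsub : p '' ({i} : Set (Fin 5))ᶜ ⊆
        (convexHull ℝ (Set.range p)).extremePoints ℝ \ {p i} := by
      rintro _ ⟨k, hk, rfl⟩
      refine ⟨hconv k, fun h => ?_⟩
      exact hk (hinj (Set.mem_singleton_iff.1 h))
    have key := (convex_convexHull ℝ (Set.range p)).convexIndependent_extremePoints
    rw [convexIndependent_set_iff_notMem_convexHull_diff] at key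
    exact key (p i) (hconv i) (convexHull_mono hsub hx2)
  · obtain ⟨i, j, hij, rfl⟩ := Set.ncard_eq_two.1 h2
    obtain ⟨a, b, -, hi, hj, hk⟩ := hsep i j hij
    have h1' : b ≤ ⟪a, x⟫ := by
      refine convexHull_min ?_ (convex_halfSpace_ge (inner_isLinearMap a) b) hx1
      rintro _ ⟨k, hk', rfl⟩
      rcases hk' with rfl | rfl
      · exact hi
      · exact hj
    have h2' : ⟪a, x⟫ < b := by
      refine convexHull_min ?_ (convex_halfSpace_lt (inner_isLinearMap a) b) hx2
      rintro _ ⟨k, hk', rfl⟩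
      simp only [Set.mem_compl_iff, Set.mem_insert_iff, Set.mem_singleton_iff, not_or] at hk'
      exact hk k hk'.1 hk'.2
    linarith

/-- Five points in ℝ³ in convex position cannot have the property that every pair of
them lies in some closed half-space excluding the other three (this would realize K₅
as the graph of a 3-polytope). -/
theorem no_K5_halfspace_separation
    (p : Fin 5 → EuclideanSpace ℝ (Fin 3))
    (hinj : Function.Injective p)
    (hconv : ∀ i, p i ∈
      Set.extremePoints ℝ (convexHull ℝ (Set.range p))) :
    ¬ ∀ i j : Fin 5, i ≠ j →
        ∃ (a : EuclideanSpace ℝ (Fin 3)) (b : ℝ), a ≠ 0 ∧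
          b ≤ ⟪a, p i⟫ ∧ b ≤ ⟪a, p j⟫ ∧
          ∀ k, k ≠ i → k ≠ j → ⟪a, p k⟫ < b := by
  intro hsep
  have hna : ¬ AffineIndependent ℝ p := by
    intro h
    have h1 := h.card_le_finrank_succ
    have h2 := Submodule.finrank_le (vectorSpan ℝ (Set.range p))
    simp [finrank_euclideanSpace] at h1 h2
    omega
  obtain ⟨I, x, hx1, hx2⟩ := Convex.radon_partition hna
  rcases le_or_gt I.ncard 2 with h | h
  · exact aux_radon hinj hconv hsep h hx1 hx2
  · have hcompl : Iᶜ.ncard ≤ 2 := by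
      have h5 := Set.ncard_add_ncard_compl I
      simp only [Nat.card_eq_fintype_card, Fintype.card_fin] at h5
      omega
    exact aux_radon hinj hconv hsep hcompl hx2 (by rwa [compl_compl])
end

section
/- For every finite set I of positive integers, there exists a real univariate polynomial P of degree at most 2|I| such that P(0) = −1, P(i) > 0 for all i ∈ I, and P(i) < 0 for all positive integers i ∉ I. -/
open Polynomial

lemma one_le_sq_sub (i j : ℕ) (h : i ≠ j) : (1:ℝ) ≤ ((i:ℝ) - j)^2 := by
  have hd : (i:ℤ) - j ≠ 0 := by
    intro hc
    apply h
    have : (i:ℤ) = j := by linarith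
    exact_mod_cast this
  have h1 : (1:ℤ) ≤ |(i:ℤ) - j| := Int.one_le_abs hd
  have h2 : (1:ℤ) ≤ ((i:ℤ) - j)^2 := by nlinarith [sq_abs ((i:ℤ) - j)]
  have : ((i:ℝ) - j)^2 = ((((i:ℤ) - j)^2 : ℤ) : ℝ) := by push_cast; ring
  rw [this]; exact_mod_cast h2

/-- For every finite set `I` of positive integers there is a real polynomial `P` of
degree at most `2|I|` with `P 0 = -1`, `P i > 0` for `i ∈ I`, and `P i < 0` for
positive integers `i ∉ I`. -/
theorem exists_separating_polynomial (I : Finset ℕ) (hI : ∀ i ∈ I, 0 < i) :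
    ∃ P : Polynomial ℝ, P.natDegree ≤ 2 * I.card ∧
      P.eval 0 = -1 ∧
      (∀ i ∈ I, 0 < P.eval (i : ℝ)) ∧
      (∀ i : ℕ, 0 < i → i ∉ I → P.eval (i : ℝ) < 0) := by
  set Q : Polynomial ℝ := ∏ i ∈ I, ((X - C (i:ℝ))^2 - C (1/16)) with hQ
  have hevalQ : ∀ x : ℝ, Q.eval x = ∏ i ∈ I, ((x - i)^2 - 1/16) := by
    intro x; simp [hQ, eval_prod]
  have hc0 : 0 < Q.eval 0 := by
    rw [hevalQ]
    apply Finset.prod_pos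
    intro i hi
    have h1 : (1:ℝ) ≤ (i:ℝ) := by exact_mod_cast hI i hi
    nlinarith
  set c : ℝ := Q.eval 0 with hc
  refine ⟨C (-c⁻¹) * Q, ?_, ?_, ?_, ?_⟩
  · calc (C (-c⁻¹) * Q).natDegree ≤ Q.natDegree := natDegree_C_mul_le _ _
      _ ≤ ∑ i ∈ I, ((X - C (i:ℝ))^2 - C (1/16)).natDegree := natDegree_prod_le _ _
      _ ≤ ∑ _i ∈ I, 2 := by
          apply Finset.sum_le_sum
          intro i _
          compute_degree
      _ = 2 * I.card := by simp [mul_comm]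
  · have : c ≠ 0 := ne_of_gt hc0
    simp [← hc]
    field_simp
  · intro i hi
    have hQi : Q.eval (i:ℝ) < 0 := by
      rw [hevalQ, ← Finset.mul_prod_erase _ _ hi]
      have hneg : ((i:ℝ) - i)^2 - 1/16 < 0 := by norm_num
      have hpos : 0 < ∏ j ∈ I.erase i, (((i:ℝ) - j)^2 - 1/16) := by
        apply Finset.prod_pos
        intro j hj
        have hne : i ≠ j := (Finset.ne_of_mem_erase hj).symm
        have := one_le_sq_sub i j hne
        linarith
      exact mul_neg_of_neg_of_pos hneg hpos
    simp only [eval_mul, eval_C]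
    have : 0 < c⁻¹ := inv_pos.mpr hc0
    nlinarith
  · intro i hipos hi
    have hQi : 0 < Q.eval (i:ℝ) := by
      rw [hevalQ]
      apply Finset.prod_pos
      intro j hj
      have hne : i ≠ j := fun h => hi (h ▸ hj)
      have := one_le_sq_sub i j hne
      linarith
    simp only [eval_mul, eval_C]
    have : 0 < c⁻¹ := inv_pos.mpr hc0
    nlinarith
end

section
/- Let H = (V, E) be a finite hypergraph with maximum matching B, let e ∈ B, and let d(e) be the number of edges e' ∈ B \ {e} for which some edge of E intersects exactly e and e' among the members of B. Then any matching consisting of edges of E that intersect e and exactly one other member of B has size at most 2d(e). -/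
open Finset

/-- If `B` is a maximum matching of a finite hypergraph, `e ∈ B`, and `d` is the number
of edges `e' ∈ B \ {e}` such that some edge of `E` intersects exactly `e` and `e'`
among the members of `B`, then every matching consisting of edges intersecting `e`
and exactly one other member of `B` has size at most `2 * d`. -/
theorem alpha_two_le_two_d {V : Type*} [DecidableEq V]
    (E : Finset (Finset V)) (B : Finset (Finset V)) (hBE : B ⊆ E)
    (hBdisj : ∀ f ∈ B, ∀ g ∈ B, f ≠ g → Disjoint f g)
    (hBmax : ∀ M ⊆ E, (∀ f ∈ M, ∀ g ∈ M, f ≠ g → Disjoint f g) → M.card ≤ B.card)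
    (e : Finset V) (he : e ∈ B)
    (d : ℕ)
    (hd : d = ((B.erase e).filter (fun e' => ∃ f ∈ E,
      B.filter (fun b => (f ∩ b).Nonempty) = {e, e'})).card) :
    ∀ M ⊆ E.filter (fun f => (f ∩ e).Nonempty ∧
        (B.filter (fun b => (f ∩ b).Nonempty)).card = 2),
      (∀ f ∈ M, ∀ g ∈ M, f ≠ g → Disjoint f g) → M.card ≤ 2 * d := by
  intro M hM hMdisj
  classical
  set key : Finset V → Finset (Finset V) :=
    fun f => (B.filter (fun b => (f ∩ b).Nonempty)).erase e with hkey
  have hmem : ∀ f ∈ M, f ∈ E ∧ (f ∩ e).Nonempty ∧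
      (B.filter (fun b => (f ∩ b).Nonempty)).card = 2 := by
    intro f hf
    have := hM hf
    simp only [mem_filter] at this
    exact ⟨this.1, this.2.1, this.2.2⟩
  have hspec : ∀ f ∈ M, ∃ e', e' ∈ B ∧ e' ≠ e ∧ (f ∩ e').Nonempty ∧
      B.filter (fun b => (f ∩ b).Nonempty) = {e, e'} ∧ key f = {e'} := by
    intro f hf
    obtain ⟨hfE, hfe, hcard⟩ := hmem f hf
    have heF : e ∈ B.filter (fun b => (f ∩ b).Nonempty) := mem_filter.mpr ⟨he, hfe⟩
    have hc1 : ((B.filter (fun b => (f ∩ b).Nonempty)).erase e).card = 1 := by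
      rw [card_erase_of_mem heF, hcard]
    obtain ⟨e', he'⟩ := card_eq_one.mp hc1
    have he'mem : e' ∈ (B.filter (fun b => (f ∩ b).Nonempty)).erase e := by
      rw [he']; exact mem_singleton_self e'
    have he'f := mem_filter.mp (mem_of_mem_erase he'mem)
    have hins := insert_erase heF
    rw [he'] at hins
    exact ⟨e', he'f.1, ne_of_mem_erase he'mem, he'f.2, hins.symm, he'⟩
  -- helper: an edge whose intersection pattern is {e, e'} is disjoint from all
  -- other members of B, and is not itself in B
  have hdisjB : ∀ x e', B.filter (fun b => (x ∩ b).Nonempty) = {e, e'} →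
      ∀ b ∈ B, b ≠ e → b ≠ e' → Disjoint x b := by
    intro x e' hx b hb hbe hbe'
    by_contra hnd
    have : b ∈ B.filter (fun b => (x ∩ b).Nonempty) :=
      mem_filter.mpr ⟨hb, not_disjoint_iff_nonempty_inter.mp hnd⟩
    rw [hx, mem_insert, mem_singleton] at this
    tauto
  have hnotB : ∀ x e', e' ∈ B → e' ≠ e → (x ∩ e).Nonempty → (x ∩ e').Nonempty →
      x ∉ B := by
    intro x e' he'B he'ne hxe hxe' hxB
    have hxne : x ≠ e := by
      rintro rfl
      exact hxe'.ne_empty (disjoint_iff_inter_eq_empty.mp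
        (hBdisj x hxB e' he'B (Ne.symm he'ne)))
    exact hxe.ne_empty (disjoint_iff_inter_eq_empty.mp (hBdisj x hxB e he hxne))
  have hfiber : ∀ s ∈ M.image key, (M.filter (fun f => key f = s)).card ≤ 2 := by
    intro s hs
    by_contra hgt
    push_neg at hgt
    obtain ⟨t, hts, htcard⟩ := exists_subset_card_eq hgt
    obtain ⟨f, g, h, hfg, hfh, hgh, ht⟩ := card_eq_three.mp htcard
    have hfM : f ∈ M ∧ key f = s := by
      have := hts (by rw [ht]; simp : f ∈ t); exact mem_filter.mp this
    have hgM : g ∈ M ∧ key g = s := by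
      have := hts (by rw [ht]; simp : g ∈ t); exact mem_filter.mp this
    have hhM : h ∈ M ∧ key h = s := by
      have := hts (by rw [ht]; simp : h ∈ t); exact mem_filter.mp this
    obtain ⟨e', he'B, he'ne, hfe', hfpat, hkf⟩ := hspec f hfM.1
    have hs' : s = {e'} := by rw [← hfM.2, hkf]
    -- all three have pattern {e, e'}
    have pat : ∀ x, x ∈ M → key x = s → B.filter (fun b => (x ∩ b).Nonempty) = {e, e'} := by
      intro x hx hxs
      obtain ⟨e'', he''B, he''ne, hxe'', hxpat, hkx⟩ := hspec x hx
      have : ({e''} : Finset (Finset V)) = {e'} := by rw [← hkx, hxs, hs']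
      have he : e'' = e' := singleton_injective this
      rwa [he] at hxpat
    have hfpat' := pat f hfM.1 hfM.2
    have hgpat := pat g hgM.1 hgM.2
    have hhpat := pat h hhM.1 hhM.2
    have hxM : ∀ x, B.filter (fun b => (x ∩ b).Nonempty) = {e, e'} →
        (x ∩ e).Nonempty ∧ (x ∩ e').Nonempty ∧ x ∉ B := by
      intro x hx
      have h1 : e ∈ B.filter (fun b => (x ∩ b).Nonempty) := by rw [hx]; simp
      have h2 : e' ∈ B.filter (fun b => (x ∩ b).Nonempty) := by rw [hx]; simp
      have h1' := (mem_filter.mp h1).2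
      have h2' := (mem_filter.mp h2).2
      exact ⟨h1', h2', hnotB x e' he'B he'ne h1' h2'⟩
    obtain ⟨hfe0, hfe'0, hfB⟩ := hxM f hfpat'
    obtain ⟨hge0, hge'0, hgB⟩ := hxM g hgpat
    obtain ⟨hhe0, hhe'0, hhB⟩ := hxM h hhpat
    -- the swapped matching
    set R : Finset (Finset V) := (B.erase e).erase e' with hR
    set B' : Finset (Finset V) := insert f (insert g (insert h R)) with hB'
    have hRB : ∀ b ∈ R, b ∈ B ∧ b ≠ e ∧ b ≠ e' := by
      intro b hb
      exact ⟨mem_of_mem_erase (mem_of_mem_erase hb), ne_of_mem_erase (mem_of_mem_erase hb),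
        ne_of_mem_erase hb⟩
    have hB'E : B' ⊆ E := by
      intro x hx
      rw [hB'] at hx
      simp only [mem_insert] at hx
      rcases hx with rfl | rfl | rfl | hx
      · exact (hmem _ hfM.1).1
      · exact (hmem _ hgM.1).1
      · exact (hmem _ hhM.1).1
      · exact hBE (hRB x hx).1
    have hB'disj : ∀ x ∈ B', ∀ y ∈ B', x ≠ y → Disjoint x y := by
      have hcase : ∀ x ∈ B', (x ∈ M ∧ B.filter (fun b => (x ∩ b).Nonempty) = {e, e'})
          ∨ (x ∈ B ∧ x ≠ e ∧ x ≠ e') := by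
        intro x hx
        rw [hB'] at hx
        simp only [mem_insert] at hx
        rcases hx with rfl | rfl | rfl | hx
        · exact Or.inl ⟨hfM.1, hfpat'⟩
        · exact Or.inl ⟨hgM.1, hgpat⟩
        · exact Or.inl ⟨hhM.1, hhpat⟩
        · exact Or.inr (hRB x hx)
      intro x hx y hy hxy
      rcases hcase x hx with ⟨hxm, hxp⟩ | ⟨hxb, hxe, hxe'⟩ <;>
        rcases hcase y hy with ⟨hym, hyp⟩ | ⟨hyb, hye, hye'⟩
      · exact hMdisj x hxm y hym hxy
      · exact hdisjB x e' hxp y hyb hye hye'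
      · exact (hdisjB y e' hyp x hxb hxe hxe').symm
      · exact hBdisj x hxb y hyb hxy
    have hle := hBmax B' hB'E hB'disj
    -- card counting
    have he'R : e' ∈ B.erase e := mem_erase.mpr ⟨he'ne, he'B⟩
    have hc1 : R.card + 1 = (B.erase e).card := card_erase_add_one he'R
    have hc2 : (B.erase e).card + 1 = B.card := card_erase_add_one he
    have hhR : h ∉ R := fun hc => hhB (hRB h hc).1
    have hgR : g ∉ insert h R := by
      simp only [mem_insert]
      rintro (rfl | hc)
      · exact hgh rfl
      · exact hgB (hRB g hc).1
    have hfR : f ∉ insert g (insert h R) := by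
      simp only [mem_insert]
      rintro (rfl | rfl | hc)
      · exact hfg rfl
      · exact hfh rfl
      · exact hfB (hRB f hc).1
    have hB'card : B'.card = R.card + 3 := by
      rw [hB', card_insert_of_notMem hfR, card_insert_of_notMem hgR,
        card_insert_of_notMem hhR]
    omega
  have h1 : M.card ≤ 2 * (M.image key).card := card_le_mul_card_image M 2 hfiber
  have h2 : M.image key ⊆ ((B.erase e).filter (fun e' => ∃ f ∈ E,
      B.filter (fun b => (f ∩ b).Nonempty) = {e, e'})).image (fun a => ({a} : Finset (Finset V))) := by
    intro s hs
    obtain ⟨f, hfM, rfl⟩ := mem_image.mp hs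
    obtain ⟨e', he'B, he'ne, hfe', hfpat, hkf⟩ := hspec f hfM
    refine mem_image.mpr ⟨e', mem_filter.mpr ⟨mem_erase.mpr ⟨he'ne, he'B⟩,
      ⟨f, (hmem f hfM).1, hfpat⟩⟩, hkf.symm⟩
  have h3 : (((B.erase e).filter (fun e' => ∃ f ∈ E,
      B.filter (fun b => (f ∩ b).Nonempty) = {e, e'})).image
      (fun a => ({a} : Finset (Finset V)))).card = d := by
    rw [card_image_of_injective _ Finset.singleton_injective, hd]
  calc M.card ≤ 2 * (M.image key).card := h1
    _ ≤ 2 * d := by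
        have := card_le_card h2
        omega
end
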